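/- arXiv:2602.08043 — 2 statements merged into one kernel-verified Lean document; each statement's English description precedes it below -/
import Mathlib

section
/- For any finite sequence x_1,...,x_n of real numbers with mean μ, maximum m, and minimum l, the variance satisfies σ² ≤ (m − μ)(μ − l). -/
/-!
Write `y = x - μ`, `a = m - μ`, `b = μ - l`. Pointwise, `(m - x)(x - l) = a b + (a - b) y - y²`,
and the left side is nonnegative because `l ≤ x ≤ m`. Summing, the linear term vanishes since the
deviations from the mean sum to zero, which leaves `∑ y² ≤ n a b`.
-/

open Finset

namespace BhatiaDavis

variable {ι : Type*} (s : Finset ι) (x : ι → ℝ) (m l μ : ℝ)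

theorem sum_sq_sub_add_sum_mul_sub :
    ∑ i ∈ s, (x i - μ) ^ 2 + ∑ i ∈ s, (m - x i) * (x i - l) =
      #s * ((m - μ) * (μ - l)) + (m + l - 2 * μ) * ∑ i ∈ s, (x i - μ) := by
  rw [← sum_add_distrib, mul_sum, ← nsmul_eq_mul, ← sum_const, ← sum_add_distrib]
  exact sum_congr rfl fun i _ => by ring

variable {s x μ}

theorem sum_sub_eq_zero_of_card_mul_eq (hμ : #s * μ = ∑ i ∈ s, x i) :
    ∑ i ∈ s, (x i - μ) = 0 := by
  rw [sum_sub_distrib, sum_const, nsmul_eq_mul, hμ, sub_self]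

variable {m l}

theorem sum_sq_sub_le_card_mul (hμ : #s * μ = ∑ i ∈ s, x i)
    (hub : ∀ i ∈ s, x i ≤ m) (hlb : ∀ i ∈ s, l ≤ x i) :
    ∑ i ∈ s, (x i - μ) ^ 2 ≤ #s * ((m - μ) * (μ - l)) := by
  have hgap : 0 ≤ ∑ i ∈ s, (m - x i) * (x i - l) :=
    sum_nonneg fun i hi => mul_nonneg (sub_nonneg.2 (hub i hi)) (sub_nonneg.2 (hlb i hi))
  have hid := sum_sq_sub_add_sum_mul_sub s x m l μ
  rw [sum_sub_eq_zero_of_card_mul_eq hμ, mul_zero, add_zero] at hid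
  linarith

end BhatiaDavis

theorem bhatia_davis_general (n : ℕ) (hn : 0 < n) (x : Fin n → ℝ) (m l μ : ℝ)
    (hμ : μ = (∑ i, x i) / n)
    (hub : ∀ i, x i ≤ m)
    (hlb : ∀ i, l ≤ x i) :
    (∑ i, (x i - μ) ^ 2) / n ≤ (m - μ) * (μ - l) := by
  have hn' : (0 : ℝ) < n := Nat.cast_pos.2 hn
  have hcard : (#(univ : Finset (Fin n)) : ℝ) = n := by rw [card_univ, Fintype.card_fin]
  have hsum : #(univ : Finset (Fin n)) * μ = ∑ i, x i := by
    rw [hcard, hμ, mul_div_cancel₀ _ hn'.ne']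
  rw [div_le_iff₀ hn', mul_comm, ← hcard]
  exact BhatiaDavis.sum_sq_sub_le_card_mul hsum (fun i _ => hub i) (fun i _ => hlb i)

/-- **Bhatia–Davis inequality**: for a finite sequence of reals with mean `μ`,
maximum `m` and minimum `l`, the population variance is at most `(m - μ)(μ - l)`. -/
theorem bhatia_davis (n : ℕ) (hn : 0 < n) (x : Fin n → ℝ) (m l μ : ℝ)
    (hμ : μ = (∑ i, x i) / n)
    (hub : ∀ i, x i ≤ m) (hm : ∃ i, x i = m)
    (hlb : ∀ i, l ≤ x i) (hl : ∃ i, x i = l) :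
    (∑ i, (x i - μ) ^ 2) / n ≤ (m - μ) * (μ - l) :=
  bhatia_davis_general n hn x m l μ hμ hub hlb
end

section
/- (AM–GM refinement of the extrema bound) For any sequence with minimum l, maximum m, and mean μ, the variance satisfies σ² ≤ (m − μ)(μ − l) ≤ ((m − l)/2)². Thus the standard deviation is at most half the range. -/
/-!
Summing the identity `(x - μ)² + (m - x)(x - l) = (m + l - 2μ) x + μ² - ml` over the sample and
using `∑ x = n μ` gives `∑ (x - μ)² + ∑ (m - x)(x - l) = n (m - μ)(μ - l)`. The second sum is
nonnegative because every `x` lies in `[l, m]`, which is the Bhatia–Davis bound; AM–GM applied to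
`m - μ` and `μ - l`, whose sum is `m - l`, gives the rest.
-/

open Finset

theorem Finset.sum_sq_sub_add_sum_mul_sub_eq {ι : Type*} (s : Finset ι) (x : ι → ℝ)
    (l m μ : ℝ) (hμ : ∑ i ∈ s, x i = #s * μ) :
    ∑ i ∈ s, (x i - μ) ^ 2 + ∑ i ∈ s, (m - x i) * (x i - l) = #s * ((m - μ) * (μ - l)) := by
  have hterm : ∀ i ∈ s, (x i - μ) ^ 2 + (m - x i) * (x i - l)
      = (m + l - 2 * μ) * x i + (μ ^ 2 - m * l) := fun i _ => by ring
  rw [← sum_add_distrib, sum_congr rfl hterm, sum_add_distrib, ← mul_sum, hμ, sum_const,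
    nsmul_eq_mul]
  ring

theorem Finset.sum_sq_sub_le_card_mul {ι : Type*} (s : Finset ι) {x : ι → ℝ} {l m μ : ℝ}
    (hlb : ∀ i ∈ s, l ≤ x i) (hub : ∀ i ∈ s, x i ≤ m) (hμ : ∑ i ∈ s, x i = #s * μ) :
    ∑ i ∈ s, (x i - μ) ^ 2 ≤ #s * ((m - μ) * (μ - l)) := by
  have hnonneg : 0 ≤ ∑ i ∈ s, (m - x i) * (x i - l) :=
    sum_nonneg fun i hi => mul_nonneg (sub_nonneg.2 (hub i hi)) (sub_nonneg.2 (hlb i hi))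
  linarith [s.sum_sq_sub_add_sum_mul_sub_eq x l m μ hμ]

theorem sub_mul_sub_le_sq_half_sub (l m μ : ℝ) : (m - μ) * (μ - l) ≤ ((m - l) / 2) ^ 2 := by
  nlinarith [four_mul_le_sq_add (m - μ) (μ - l)]

theorem extrema_variance_amgm_general (n : ℕ) (hn : 0 < n) (x : Fin n → ℝ) (l m μ : ℝ)
    (hlb : ∀ i, l ≤ x i)
    (hub : ∀ i, x i ≤ m)
    (hμ : μ = (∑ i, x i) / n) :
    (∑ i, (x i - μ) ^ 2) / n ≤ (m - μ) * (μ - l) ∧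
    (m - μ) * (μ - l) ≤ ((m - l) / 2) ^ 2 ∧
    Real.sqrt ((∑ i, (x i - μ) ^ 2) / n) ≤ (m - l) / 2 := by
  have hn' : (0 : ℝ) < n := Nat.cast_pos.2 hn
  have hsum : ∑ i, x i = #(univ : Finset (Fin n)) * μ := by
    rw [card_univ, Fintype.card_fin, hμ, mul_div_cancel₀ _ hn'.ne']
  have hBD : (∑ i, (x i - μ) ^ 2) / n ≤ (m - μ) * (μ - l) := by
    rw [div_le_iff₀ hn', mul_comm]
    simpa using univ.sum_sq_sub_le_card_mul (fun i _ => hlb i) (fun i _ => hub i) hsum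
  have hAM := sub_mul_sub_le_sq_half_sub l m μ
  have hlm : l ≤ m := (hlb ⟨0, hn⟩).trans (hub ⟨0, hn⟩)
  exact ⟨hBD, hAM, (Real.sqrt_le_left (by linarith)).2 (hBD.trans hAM)⟩

/-- AM–GM refinement of the extrema-variance bound (Bhatia–Davis plus Popoviciu):
`σ² ≤ (m - μ)(μ - l) ≤ ((m - l)/2)²`, so the standard deviation is at most half the range. -/
theorem extrema_variance_amgm (n : ℕ) (hn : 0 < n) (x : Fin n → ℝ) (l m μ : ℝ)
    (hlb : ∀ i, l ≤ x i) (hl : ∃ i, x i = l)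
    (hub : ∀ i, x i ≤ m) (hm : ∃ i, x i = m)
    (hμ : μ = (∑ i, x i) / n) :
    (∑ i, (x i - μ) ^ 2) / n ≤ (m - μ) * (μ - l) ∧
    (m - μ) * (μ - l) ≤ ((m - l) / 2) ^ 2 ∧
    Real.sqrt ((∑ i, (x i - μ) ^ 2) / n) ≤ (m - l) / 2 :=
  extrema_variance_amgm_general n hn x l m μ hlb hub hμ
end
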